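/- Let R be an artin algebra, A, B ∈ mod-R and f ∈ Hom(A, B). Then f ∈ rad(A, B) if and only if for every non-zero a ∈ A, if φ generates the pp-type of a in A and ψ generates the pp-type of f(a) in B, then ψ < φ (strictly). -/

import Mathlib

/-! The pp-type of an element `b` of a finitely presented module `B` is generated by the formula
`θ` saying "`x` is the image of `b`'s representative in a finite presentation of `B`", and the
solutions of `θ` in any `A` are exactly the images of `b` under homomorphisms `B → A`.
So if `φ`, `ψ` generate the pp-types of `a` and `f a`, then always `ψ ≤ φ`, while `φ ≤ ψ` holds
iff `g (f a) = a` for some `g : B → A`. Over an artin algebra `A` has finite length, so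
`1 - g ∘ f` is invertible iff it is injective, i.e. iff `g ∘ f` fixes no non-zero `a`. -/

universe u v

/-- A pp-`n`-formula over the ring `R`: `∃ y₁ … y_{nex}` such that the `neq` homogeneous
linear equations encoded by the matrix `H` hold of `(x, y)`. -/
structure PPFormula (R : Type u) [Ring R] (n : ℕ) : Type u where
  nex : ℕ
  neq : ℕ
  H : Matrix (Fin n ⊕ Fin nex) (Fin neq) R

namespace PPFormula

variable {R : Type u} [Ring R] {n : ℕ}

/-- The solution set of a pp-formula in a module. -/
def Holds (φ : PPFormula R n) (M : Type v) [AddCommGroup M] [Module R M]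
    (x : Fin n → M) : Prop :=
  ∃ y : Fin φ.nex → M, ∀ j : Fin φ.neq,
    (∑ i, φ.H (Sum.inl i) j • x i) + (∑ l, φ.H (Sum.inr l) j • y l) = 0

/-- The pp-definable subgroup `φ(M)` attached to a pp-1-formula. -/
def sub (φ : PPFormula R 1) (M : Type v) [AddCommGroup M] [Module R M] :
    AddSubgroup M where
  carrier := {m : M | φ.Holds M (fun _ => m)}
  zero_mem' := ⟨0, fun j => by simp⟩
  add_mem' := by
    rintro a b ⟨y, hy⟩ ⟨z, hz⟩
    refine ⟨y + z, fun j => ?_⟩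
    have h := congrArg₂ (· + ·) (hy j) (hz j)
    simp only [Pi.add_apply, smul_add, Finset.sum_add_distrib] at *
    rw [add_zero] at h
    rw [← h]; abel
  neg_mem' := by
    rintro a ⟨y, hy⟩
    refine ⟨-y, fun j => ?_⟩
    have h := congrArg (fun t => -t) (hy j)
    simp only [Pi.neg_apply, smul_neg, Finset.sum_neg_distrib, neg_add_rev, neg_zero] at *
    rw [← h]; abel

/-- Implication ordering on pp-formulas: `φ ≤ ψ` iff in every module every solution of `φ`
is a solution of `ψ`. -/
def Le (φ ψ : PPFormula R n) : Prop :=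
  ∀ (M : Type u) [AddCommGroup M] [Module R M] (x : Fin n → M), φ.Holds M x → ψ.Holds M x

/-- `φ` generates the pp-type of `a` in `M`. -/
def Generates (φ : PPFormula R 1) (M : Type u) [AddCommGroup M] [Module R M]
    (a : M) : Prop :=
  a ∈ φ.sub M ∧ ∀ ψ : PPFormula R 1, a ∈ ψ.sub M → φ.Le ψ

/-- The interval `[ψ, φ]` in the lattice of pp-1-formulas has length at most `N`:
there is no strictly ascending chain of length `> N` between `ψ` and `φ`. -/
def IntervalLengthLE (ψ φ : PPFormula R 1) (N : ℕ) : Prop :=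
  ∀ (m : ℕ) (c : Fin (m + 1) → PPFormula R 1),
    (∀ i, ψ.Le (c i) ∧ (c i).Le φ) →
    (∀ i : Fin m, (c i.castSucc).Le (c i.succ) ∧ ¬ (c i.succ).Le (c i.castSucc)) →
    m ≤ N

end PPFormula

section Defs

variable (R : Type u) [Ring R]

/-- An embedding of modules is short of length `N` if for every element `a` of the source,
any generator of the pp-type of `a` and any generator of the pp-type of its image bound an
interval of length at most `N` in the lattice of pp-formulas. -/
def IsShortOfLength {M N : Type u} [AddCommGroup M] [Module R M] [AddCommGroup N]
    [Module R N] (f : M →ₗ[R] N) (B : ℕ) : Prop :=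
  Function.Injective f ∧
    ∀ (a : M) (φ ψ : PPFormula R 1), φ.Generates M a → ψ.Generates N (f a) →
      PPFormula.IntervalLengthLE ψ φ B

/-- A short embedding of modules. -/
def IsShortEmbedding {M N : Type u} [AddCommGroup M] [Module R M] [AddCommGroup N]
    [Module R N] (f : M →ₗ[R] N) : Prop :=
  ∃ B : ℕ, IsShortOfLength R f B

/-- A pure embedding: an injective linear map reflecting all pp-formulas. -/
def IsPureEmbedding {M N : Type u} [AddCommGroup M] [Module R M] [AddCommGroup N]
    [Module R N] (f : M →ₗ[R] N) : Prop :=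
  Function.Injective f ∧
    ∀ (n : ℕ) (φ : PPFormula R n) (x : Fin n → M), φ.Holds N (f ∘ x) → φ.Holds M x

/-- A module is pure-injective if it is injective over all pure embeddings. -/
def IsPureInjective (M : Type u) [AddCommGroup M] [Module R M] : Prop :=
  ∀ (A B : Type u) [AddCommGroup A] [Module R A] [AddCommGroup B] [Module R B]
    (f : A →ₗ[R] B), IsPureEmbedding R f →
      ∀ g : A →ₗ[R] M, ∃ h : B →ₗ[R] M, h.comp f = g

/-- A module is Σ-pure-injective iff it has no infinite properly descending chain of
pp-definable subgroups, i.e. every descending chain stabilizes. -/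
def IsSigmaPureInjective (M : Type u) [AddCommGroup M] [Module R M] : Prop :=
  ∀ c : ℕ → PPFormula R 1, (∀ i, ((c (i + 1)).sub M : AddSubgroup M) ≤ (c i).sub M) →
    ∃ N : ℕ, ∀ i, N ≤ i → ((c i).sub M : AddSubgroup M) = (c N).sub M

/-- The ascending chain condition on pp-definable subgroups. -/
def HasACCppSubgroups (M : Type u) [AddCommGroup M] [Module R M] : Prop :=
  ∀ c : ℕ → PPFormula R 1, (∀ i, ((c i).sub M : AddSubgroup M) ≤ (c (i + 1)).sub M) →
    ∃ N : ℕ, ∀ i, N ≤ i → ((c i).sub M : AddSubgroup M) = (c N).sub M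

/-- The lattice of pp-definable subgroups of `M` has finite length. -/
def HasFiniteLengthPPLattice (M : Type u) [AddCommGroup M] [Module R M] : Prop :=
  ∃ B : ℕ, ∀ (m : ℕ) (c : Fin (m + 1) → PPFormula R 1),
    (∀ i : Fin m, ((c i.castSucc).sub M : AddSubgroup M) < (c i.succ).sub M) → m ≤ B

/-- A module is indecomposable: non-zero, and `0`, `id` are its only idempotent
endomorphisms. -/
def IsIndecomposableModule (M : Type v) [AddCommGroup M] [Module R M] : Prop :=
  (∃ x : M, x ≠ 0) ∧ ∀ e : M →ₗ[R] M, e ∘ₗ e = e → e = 0 ∨ e = LinearMap.id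

/-- A bundled module over `R`. -/
structure ModuleBdl (R : Type u) [Ring R] : Type (u + 1) where
  carrier : Type u
  [acg : AddCommGroup carrier]
  [mod : Module R carrier]

attribute [instance] ModuleBdl.acg ModuleBdl.mod

/-- `N` belongs to the Ziegler closure of the set `S` of modules: `N` is an indecomposable
pure-injective module such that every basic Ziegler-open neighbourhood `(φ/ψ)` of `N` meets
`S`. -/
def MemZieglerClosure (S : Set (ModuleBdl R)) (N : ModuleBdl R) : Prop :=
  IsIndecomposableModule R N.carrier ∧ IsPureInjective R N.carrier ∧
    ∀ φ ψ : PPFormula R 1, ψ.Le φ →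
      (ψ.sub N.carrier : AddSubgroup N.carrier) ≠ φ.sub N.carrier →
      ∃ M ∈ S, (ψ.sub M.carrier : AddSubgroup M.carrier) ≠ φ.sub M.carrier

/-- A generic module: indecomposable with pp-lattice of finite length. -/
def IsGenericModule (M : Type u) [AddCommGroup M] [Module R M] : Prop :=
  IsIndecomposableModule R M ∧ HasFiniteLengthPPLattice R M

end Defs

/-- The radical of `mod-R`: `f ∈ rad(A,B)` iff `1_A - g ∘ f` is an isomorphism for every
`g : B → A`. -/
def InModRadical {R : Type u} [Ring R] {A B : Type u} [AddCommGroup A] [Module R A]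
    [AddCommGroup B] [Module R B] (f : A →ₗ[R] B) : Prop :=
  ∀ g : B →ₗ[R] A, IsUnit ((1 : Module.End R A) - g ∘ₗ f)

namespace PPFormula

variable {R : Type u} [Ring R]

theorem Holds.map {n : ℕ} {φ : PPFormula R n} {M N : Type*} [AddCommGroup M] [Module R M]
    [AddCommGroup N] [Module R N] (g : M →ₗ[R] N) {x : Fin n → M} (h : φ.Holds M x) :
    φ.Holds N (g ∘ x) := by
  obtain ⟨y, hy⟩ := h
  refine ⟨g ∘ y, fun j => ?_⟩
  simpa only [map_add, map_sum, map_smul, map_zero, Function.comp_apply] using congrArg g (hy j)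

theorem map_mem_sub {φ : PPFormula R 1} {M N : Type*} [AddCommGroup M] [Module R M]
    [AddCommGroup N] [Module R N] (g : M →ₗ[R] N) {m : M} (h : m ∈ φ.sub M) :
    g m ∈ φ.sub N :=
  Holds.map g h

theorem le_iff_forall_mem_sub {φ ψ : PPFormula R 1} :
    φ.Le ψ ↔ ∀ (M : Type u) [AddCommGroup M] [Module R M] (m : M), m ∈ φ.sub M → m ∈ ψ.sub M := by
  refine ⟨fun h M _ _ m => h M _, fun h M _ _ x hx => ?_⟩
  have hx_const : x = fun _ => x 0 := funext fun i => congrArg x (Subsingleton.elim i 0)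
  rw [hx_const] at hx ⊢
  exact h M (x 0) hx

theorem Generates.le_iff_mem_sub {φ ψ : PPFormula R 1} {M : Type u} [AddCommGroup M]
    [Module R M] {m : M} (hφ : φ.Generates M m) : φ.Le ψ ↔ m ∈ ψ.sub M :=
  ⟨fun h => le_iff_forall_mem_sub.1 h M m hφ.1, hφ.2 ψ⟩

/-- In Prest's terminology: `(B, b)` is a free realisation of `θ`. -/
def IsFreeRealisation (θ : PPFormula R 1) (B : Type u) [AddCommGroup B] [Module R B] (b : B) :
    Prop :=
  ∀ (A : Type u) [AddCommGroup A] [Module R A] (a : A), a ∈ θ.sub A ↔ ∃ g : B →ₗ[R] A, g b = a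

theorem IsFreeRealisation.generates {θ : PPFormula R 1} {B : Type u} [AddCommGroup B]
    [Module R B] {b : B} (hθ : θ.IsFreeRealisation B b) : θ.Generates B b := by
  refine ⟨(hθ B b).2 ⟨LinearMap.id, rfl⟩, fun χ hχ => le_iff_forall_mem_sub.2 ?_⟩
  intro A _ _ a ha
  obtain ⟨g, rfl⟩ := (hθ A a).1 ha
  exact map_mem_sub g hχ

/-- `∃ y, x = ∑ᵢ vᵢ yᵢ ∧ ∀ j, ∑ᵢ g(eⱼ)ᵢ yᵢ = 0`: column `0` of `H` is the equation for `x`,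
column `j + 1` the relation `g (eⱼ)`. -/
def ofPresentation {n m : ℕ} (g : (Fin m → R) →ₗ[R] (Fin n → R)) (v : Fin n → R) :
    PPFormula R 1 where
  nex := n
  neq := m + 1
  H := Sum.elim (fun _ => Fin.cons 1 0) (fun i => Fin.cons (-v i) fun j => g (Pi.single j 1) i)

theorem mem_sub_ofPresentation_iff_exists_linearCombination {n m : ℕ}
    (g : (Fin m → R) →ₗ[R] (Fin n → R)) (v : Fin n → R) {M : Type*} [AddCommGroup M] [Module R M] (c : M) :
    c ∈ (ofPresentation g v).sub M ↔ ∃ y : Fin n → M,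
      Fintype.linearCombination R y v = c ∧
        ∀ j, Fintype.linearCombination R y (g (Pi.single j 1)) = 0 := by
  change (∃ y, _) ↔ _
  refine exists_congr fun y => ?_
  simp only [Fin.forall_fin_succ, ofPresentation, Sum.elim_inl, Sum.elim_inr, Fin.cons_zero,
    Fin.cons_succ, Fin.sum_univ_one, one_smul, zero_smul, zero_add, Pi.zero_apply, neg_smul,
    Finset.sum_neg_distrib, add_neg_eq_zero]
  rw [eq_comm]
  rfl

theorem mem_sub_ofPresentation_iff {n m : ℕ} (g : (Fin m → R) →ₗ[R] (Fin n → R))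
    (v : Fin n → R) {M : Type*} [AddCommGroup M] [Module R M] (c : M) :
    c ∈ (ofPresentation g v).sub M ↔ ∃ h : (Fin n → R) →ₗ[R] M, h ∘ₗ g = 0 ∧ h v = c := by
  rw [mem_sub_ofPresentation_iff_exists_linearCombination]
  constructor
  · rintro ⟨y, hyv, hyg⟩
    exact ⟨Fintype.linearCombination R y, by ext j; simpa using hyg j, hyv⟩
  · rintro ⟨h, hhg, rfl⟩
    have hh : Fintype.linearCombination R (fun i => h (Pi.single i 1)) = h := by
      ext i; simp
    refine ⟨fun i => h (Pi.single i 1), by rw [hh], fun j => ?_⟩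
    rw [hh]
    exact LinearMap.congr_fun hhg (Pi.single j 1)

theorem isFreeRealisation_ofPresentation {n m : ℕ} {B : Type u} [AddCommGroup B] [Module R B]
    {g : (Fin m → R) →ₗ[R] (Fin n → R)} {π : (Fin n → R) →ₗ[R] B}
    (hπ : Function.Surjective π) (hexact : Function.Exact g π) (v : Fin n → R) :
    (ofPresentation g v).IsFreeRealisation B (π v) := by
  intro A _ _ a
  rw [mem_sub_ofPresentation_iff]
  constructor
  · rintro ⟨h, hhg, rfl⟩
    have hker : LinearMap.range g ≤ LinearMap.ker h := by
      rintro _ ⟨w, rfl⟩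
      exact LinearMap.congr_fun hhg w
    refine ⟨(LinearMap.range g).liftQ h hker ∘ₗ (hexact.linearEquivOfSurjective hπ).symm, ?_⟩
    simp
  · rintro ⟨φ, rfl⟩
    exact ⟨φ ∘ₗ π, by rw [LinearMap.comp_assoc, hexact.linearMap_comp_eq_zero,
      LinearMap.comp_zero], rfl⟩

variable (R) in
theorem exists_isFreeRealisation {B : Type u} [AddCommGroup B] [Module R B]
    [Module.FinitePresentation R B] (b : B) : ∃ θ : PPFormula R 1, θ.IsFreeRealisation B b := by
  obtain ⟨n, m, π, g, hπ, hexact⟩ := Module.FinitePresentation.exists_fin' R B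
  obtain ⟨v, rfl⟩ := hπ b
  exact ⟨_, isFreeRealisation_ofPresentation hπ hexact v⟩

theorem Generates.isFreeRealisation {ψ : PPFormula R 1} {B : Type u} [AddCommGroup B]
    [Module R B] [Module.FinitePresentation R B] {b : B} (hψ : ψ.Generates B b) :
    ψ.IsFreeRealisation B b := by
  obtain ⟨θ, hθ⟩ := exists_isFreeRealisation R b
  have hψθ : ψ.Le θ := hψ.2 θ hθ.generates.1
  intro A _ _ a
  refine ⟨fun ha => (hθ A a).1 (le_iff_forall_mem_sub.1 hψθ A a ha), ?_⟩
  rintro ⟨g, rfl⟩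
  exact map_mem_sub g hψ.1

theorem Generates.le_iff_exists_apply_eq {φ ψ : PPFormula R 1} {A B : Type u} [AddCommGroup A]
    [Module R A] [AddCommGroup B] [Module R B] [Module.FinitePresentation R B] {a : A} {b : B}
    (hφ : φ.Generates A a) (hψ : ψ.Generates B b) : φ.Le ψ ↔ ∃ g : B →ₗ[R] A, g b = a :=
  hφ.le_iff_mem_sub.trans (hψ.isFreeRealisation A a)

end PPFormula

theorem inModRadical_iff_of_isArtinian {R : Type u} [Ring R] {A B : Type u} [AddCommGroup A]
    [Module R A] [IsArtinian R A] [AddCommGroup B] [Module R B] (f : A →ₗ[R] B) :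
    InModRadical f ↔ ∀ (g : B →ₗ[R] A) (a : A), g (f a) = a → a = 0 := by
  refine forall_congr' fun g => ?_
  have hker : ∀ a, ((1 : Module.End R A) - g ∘ₗ f) a = 0 ↔ g (f a) = a := fun a => by
    simp only [LinearMap.sub_apply, Module.End.one_apply, LinearMap.comp_apply, sub_eq_zero]
    exact eq_comm
  rw [Module.End.isUnit_iff]
  refine ⟨fun hbij a hfix => hbij.injective ((hker a).2 hfix |>.trans (map_zero _).symm), ?_⟩
  intro h
  refine IsArtinian.bijective_of_injective_endomorphism _ ?_
  exact (injective_iff_map_eq_zero _).2 fun a ha => h a ((hker a).1 ha)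

/-- Let `R` be an artin algebra (an algebra, finitely generated as a module, over a
commutative artinian ring `k`), let `A, B` be finitely presented `R`-modules and
`f : A → B` a homomorphism.  Then `f` lies in the radical `rad(A,B)` of `mod-R` iff for
every non-zero `a ∈ A`, whenever `φ` generates the pp-type of `a` in `A` and `ψ` generates
the pp-type of `f(a)` in `B`, then `ψ < φ` strictly. -/
theorem mem_radical_iff_strictly_increases_ppTypes
    (k : Type u) [CommRing k] [IsArtinianRing k]
    (R : Type u) [Ring R] [Algebra k R] [Module.Finite k R]
    (A B : Type u) [AddCommGroup A] [Module R A] [AddCommGroup B] [Module R B]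
    [Module.FinitePresentation R A] [Module.FinitePresentation R B]
    (f : A →ₗ[R] B) :
    InModRadical f ↔
      ∀ a : A, a ≠ 0 → ∀ φ ψ : PPFormula R 1,
        φ.Generates A a → ψ.Generates B (f a) → ψ.Le φ ∧ ¬ φ.Le ψ := by
  have : IsArtinianRing R := isArtinian_of_tower k inferInstance
  rw [inModRadical_iff_of_isArtinian]
  constructor
  · intro hrad a ha φ ψ hφ hψ
    refine ⟨hψ.le_iff_mem_sub.2 (PPFormula.map_mem_sub f hφ.1), fun hφψ => ha ?_⟩
    obtain ⟨g, hg⟩ := (hφ.le_iff_exists_apply_eq hψ).1 hφψ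
    exact hrad g a hg
  · intro hyp g a hfix
    by_contra ha
    obtain ⟨φ, hφ⟩ := PPFormula.exists_isFreeRealisation R a
    obtain ⟨ψ, hψ⟩ := PPFormula.exists_isFreeRealisation R (f a)
    exact (hyp a ha φ ψ hφ.generates hψ.generates).2
      ((hφ.generates.le_iff_exists_apply_eq hψ.generates).2 ⟨g, hfix⟩)
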